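/- Let w, s, v be simply typed λ-terms of the same type for s and v, with value complexities θ, τ, τ′ respectively, and let w{v/s} be the term obtained from w by replacing some occurrences of s by v (allowing variable capture). Then the value complexity of w{v/s} is either at most θ or equal to τ′; moreover, if τ′ ≤ τ then the value complexity of w{v/s} is at most θ. -/

import Mathlib

/-- Simple types. -/
inductive Ty : Type
  | base : Ty
  | arrow : Ty → Ty → Ty
  | prod : Ty → Ty → Ty
  | sum : Ty → Ty → Ty

/-- Complexity (size) of a type. -/
def Ty.size : Ty → ℕ
  | .base => 1
  | .arrow A B => A.size + B.size + 1
  | .prod A B => A.size + B.size + 1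
  | .sum A B => A.size + B.size + 1

/-- Simply typed λ-terms (de Bruijn variables; abstractions and injections are
annotated with the type of the whole term, so that value complexity is defined). -/
inductive Tm : Type
  | var : ℕ → Tm
  | lam : Ty → Tm → Tm
  | app : Tm → Tm → Tm
  | pair : Tm → Tm → Tm
  | proj : Bool → Tm → Tm
  | inl : Ty → Tm → Tm
  | inr : Ty → Tm → Tm
  | case : Tm → Tm → Tm → Tm

/-- One element of a stack: an applied argument, a projection, or a case elimination. -/
inductive Elim : Type
  | arg : Tm → Elim
  | proj : Bool → Elim
  | cas : Tm → Tm → Elim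

/-- A stack element is case-free if it is not a case elimination. -/
def Elim.CaseFree : Elim → Prop
  | .arg _ => True
  | .proj _ => True
  | .cas _ _ => False

/-- Apply one elimination to a term. -/
def plug : Tm → Elim → Tm
  | t, .arg u => .app t u
  | t, .proj b => .proj b t
  | t, .cas u v => .case t u v

/-- Apply the eliminations of a stack to a term, in order. -/
def plugStack (t : Tm) (σ : List Elim) : Tm := σ.foldl plug t

/-- Auxiliary function: `vcS t σ` is the value complexity of `t` applied to the
case-free stack `σ`. -/
def vcS : Tm → List Elim → ℕ
  | .app t w, σ => vcS t (.arg w :: σ)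
  | .proj b t, σ => vcS t (.proj b :: σ)
  | .case _ u v, σ => max (vcS u σ) (vcS v σ)
  | .lam T _, [] => T.size
  | .inl T _, [] => T.size
  | .inr T _, [] => T.size
  | .pair u v, [] => max (vcS u []) (vcS v [])
  | _, _ => 0

/-- Value complexity of a term: type complexity for abstractions and injections,
max of the components for pairs, `max (vc (uσ')) (vc (vσ'))` for a case
distinction `t[x.u, y.v]` under a case-free stack `σ'`, and `0` otherwise. -/
def vc (t : Tm) : ℕ := vcS t []


/-- Typing judgment `HasTy Γ t T` for de Bruijn terms. -/
inductive HasTy : List Ty → Tm → Ty → Prop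
  | var {Γ n A} : Γ[n]? = some A → HasTy Γ (.var n) A
  | lam {Γ A B t} : HasTy (A :: Γ) t B → HasTy Γ (.lam (Ty.arrow A B) t) (Ty.arrow A B)
  | app {Γ A B t u} : HasTy Γ t (Ty.arrow A B) → HasTy Γ u A → HasTy Γ (.app t u) B
  | pair {Γ A B t u} : HasTy Γ t A → HasTy Γ u B → HasTy Γ (.pair t u) (Ty.prod A B)
  | projL {Γ A B t} : HasTy Γ t (Ty.prod A B) → HasTy Γ (.proj false t) A
  | projR {Γ A B t} : HasTy Γ t (Ty.prod A B) → HasTy Γ (.proj true t) B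
  | inl {Γ A B t} : HasTy Γ t A → HasTy Γ (.inl (Ty.sum A B) t) (Ty.sum A B)
  | inr {Γ A B t} : HasTy Γ t B → HasTy Γ (.inr (Ty.sum A B) t) (Ty.sum A B)
  | case {Γ A B C t u v} : HasTy Γ t (Ty.sum A B) → HasTy (A :: Γ) u C →
      HasTy (B :: Γ) v C → HasTy Γ (.case t u v) C

/-- Simple replacement: `Repl s v w w'` holds when `w'` is obtained from `w` by
replacing some occurrences of `s` by `v` (possibly causing capture of variables). -/
inductive Repl (s v : Tm) : Tm → Tm → Prop
  | here : Repl s v s v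
  | var (n) : Repl s v (.var n) (.var n)
  | lam {t t'} (T) : Repl s v t t' → Repl s v (.lam T t) (.lam T t')
  | app {t t' u u'} : Repl s v t t' → Repl s v u u' → Repl s v (.app t u) (.app t' u')
  | pair {t t' u u'} : Repl s v t t' → Repl s v u u' → Repl s v (.pair t u) (.pair t' u')
  | proj {t t'} (b) : Repl s v t t' → Repl s v (.proj b t) (.proj b t')
  | inl {t t'} (T) : Repl s v t t' → Repl s v (.inl T t) (.inl T t')
  | inr {t t'} (T) : Repl s v t t' → Repl s v (.inr T t) (.inr T t')
  | case {t t' u u' w w'} : Repl s v t t' → Repl s v u u' → Repl s v w w' →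
      Repl s v (.case t u w) (.case t' u' w')

/-!
A term under a nonempty stack has value complexity `0`, so `vc` is compositional: it vanishes
on applications and projections, is the annotated type size on abstractions and injections,
and is the maximum over the two components on pairs and over the two branches on case
distinctions. A simple replacement keeps every annotation, so a structural induction on it
goes through: both `vc w' ≤ vc w ∨ vc w' = vc v` and `vc w' ≤ vc w` are preserved by `max`.
-/

theorem vcS_cons_eq_zero (t : Tm) (e : Elim) (σ : List Elim) : vcS t (e :: σ) = 0 := by
  induction t generalizing e σ with
  | app _ u ih _ => exact ih (.arg u) (e :: σ)
  | proj b _ ih => exact ih (.proj b) (e :: σ)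
  | case _ _ _ _ ihu ihw => simp only [vcS, ihu, ihw, max_self]
  | _ => rfl

section vc

variable (T : Ty) (b : Bool) (t u w : Tm)

@[simp] theorem vc_app : vc (.app t u) = 0 := vcS_cons_eq_zero t (.arg u) []
@[simp] theorem vc_proj : vc (.proj b t) = 0 := vcS_cons_eq_zero t (.proj b) []
@[simp] theorem vc_case : vc (.case t u w) = max (vc u) (vc w) := rfl
@[simp] theorem vc_pair : vc (.pair t u) = max (vc t) (vc u) := rfl
@[simp] theorem vc_lam : vc (.lam T t) = T.size := rfl
@[simp] theorem vc_inl : vc (.inl T t) = T.size := rfl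
@[simp] theorem vc_inr : vc (.inr T t) = T.size := rfl

end vc

theorem max_le_max_or_eq {a b a' b' c : ℕ} (ha : a' ≤ a ∨ a' = c) (hb : b' ≤ b ∨ b' = c) :
    max a' b' ≤ max a b ∨ max a' b' = c := by
  omega

section Repl

variable {s v w w' : Tm}

theorem Repl.vc_le_or_eq (h : Repl s v w w') : vc w' ≤ vc w ∨ vc w' = vc v := by
  induction h with
  | here => exact .inr rfl
  | pair _ _ iht ihu => simpa only [vc_pair] using max_le_max_or_eq iht ihu
  | case _ _ _ _ ihu ihw => simpa only [vc_case] using max_le_max_or_eq ihu ihw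
  | _ => simp

theorem Repl.vc_le (h : Repl s v w w') (hvs : vc v ≤ vc s) : vc w' ≤ vc w := by
  induction h with
  | here => exact hvs
  | pair _ _ iht ihu => simpa only [vc_pair] using max_le_max iht ihu
  | case _ _ _ _ ihu ihw => simpa only [vc_case] using max_le_max ihu ihw
  | _ => simp

end Repl

theorem change_of_value_general {w s v w' : Tm}
    (h : Repl s v w w') :
    (vc w' ≤ vc w ∨ vc w' = vc v) ∧ (vc v ≤ vc s → vc w' ≤ vc w) :=
  ⟨h.vc_le_or_eq, h.vc_le⟩

/-- "The Change of Value": let `w, s, v` be simply typed λ-terms, with `s` and `v`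
of the same type, and value complexities `θ = vc w`, `τ = vc s`, `τ' = vc v`.
Then the value complexity of `w{v/s}` is either at most `θ` or equal to `τ'`;
moreover, if `τ' ≤ τ` then the value complexity of `w{v/s}` is at most `θ`. -/
theorem change_of_value {Γ : List Ty} {T : Ty} {w s v w' : Tm}
    (hs : HasTy Γ s T) (hv : HasTy Γ v T) (h : Repl s v w w') :
    (vc w' ≤ vc w ∨ vc w' = vc v) ∧ (vc v ≤ vc s → vc w' ≤ vc w) :=
  change_of_value_general h
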